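/- Let A be a d×d integer matrix, invertible over ℝ, with ‖A^{-1}‖ < 1 for the operator norm, let f = f_A : T^d → T^d be the induced map and c := 1 − ‖A^{-1}‖. For x ∈ T^d and r > 0, if p := τ(B(x,r)) is finite, then the distance from x to the set F_p := {y ∈ T^d : f^p y = y} of periodic points of period p is at most (1 + 2/c)·r. -/

import Mathlib

/-!
A point `z` of the ball whose `p`-th image is again in the ball has a lift `z̃` with
`A^p z̃ = z̃ + m + u`, where `m ∈ ℤ^d` and `‖u‖ < 2r`. Since `‖A^{-p}‖ ≤ ‖A^{-1}‖ < 1`, the map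
`y ↦ A^{-p} (y + m)` is a contraction; its fixed point `y` satisfies `A^p y = y + m`, so it projects
to a point of period `p`, and the a priori estimate of Banach's fixed point theorem gives
`‖z̃ - y‖ ≤ ‖u‖ / c < 2r / c`.
-/

open MeasureTheory Filter Metric Set
open scoped NNReal ENNReal ENat Topology

noncomputable section

/-- The first return time (Poincaré recurrence) of a set `A` under a map `f`:
`τ(A) = min {k > 0 : f^k(A) ∩ A ≠ ∅}`, with value `⊤ = ∞` if no such `k` exists. -/
def tau {X : Type*} (f : X → X) (A : Set X) : ℕ∞ :=
  ⨅ (k : ℕ) (_ : 0 < k ∧ ((f^[k]) '' A ∩ A).Nonempty), (k : ℕ∞)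

/-- The integer lattice ℤ^d inside Euclidean space ℝ^d. -/
def intLattice (d : ℕ) : AddSubgroup (EuclideanSpace ℝ (Fin d)) where
  carrier := {x | ∀ i, ∃ m : ℤ, x i = (m : ℝ)}
  zero_mem' := fun i => ⟨0, by simp⟩
  add_mem' := by
    rintro a b ha hb i
    obtain ⟨m, hm⟩ := ha i
    obtain ⟨n, hn⟩ := hb i
    exact ⟨m + n, by push_cast [PiLp.add_apply, hm, hn]; ring⟩
  neg_mem' := by
    rintro a ha i
    obtain ⟨m, hm⟩ := ha i
    exact ⟨-m, by push_cast [PiLp.neg_apply, hm]; ring⟩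

instance intLattice_isClosed (d : ℕ) :
    IsClosed ((intLattice d : AddSubgroup (EuclideanSpace ℝ (Fin d))) :
      Set (EuclideanSpace ℝ (Fin d))) := by
  have h1 : ((intLattice d : AddSubgroup (EuclideanSpace ℝ (Fin d))) :
        Set (EuclideanSpace ℝ (Fin d)))
      = ⋂ i, (fun x : EuclideanSpace ℝ (Fin d) => x i) ⁻¹' (Set.range ((↑) : ℤ → ℝ)) := by
    ext x
    simp [intLattice, AddSubgroup.mem_carrier, eq_comm]
  rw [h1]
  refine isClosed_iInter fun i => IsClosed.preimage ?_ ?_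
  · exact (EuclideanSpace.proj i : EuclideanSpace ℝ (Fin d) →L[ℝ] ℝ).continuous
  · exact Int.isClosedEmbedding_coe_real.isClosed_range

/-- The d-dimensional torus ℝ^d/ℤ^d.  As a quotient of the Euclidean space ℝ^d by the
(closed) subgroup ℤ^d it carries the quotient metric
`d(x,y) = inf_{m ∈ ℤ^d} ‖x' - y' - m‖` induced by the Euclidean norm. -/
abbrev Torus (d : ℕ) := EuclideanSpace ℝ (Fin d) ⧸ intLattice d

/-- A real d×d matrix seen as a continuous linear map on Euclidean space ℝ^d. -/
def matCLM {d : ℕ} (A : Matrix (Fin d) (Fin d) ℝ) :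
    EuclideanSpace ℝ (Fin d) →L[ℝ] EuclideanSpace ℝ (Fin d) :=
  LinearMap.toContinuousLinearMap (Matrix.toEuclideanLin A)

theorem intLattice_mapsTo {d : ℕ} (A : Matrix (Fin d) (Fin d) ℤ) :
    intLattice d ≤ (intLattice d).comap
      ((matCLM (A.map (Int.cast : ℤ → ℝ))).toLinearMap.toAddMonoidHom) := by
  intro x hx
  choose m hm using hx
  intro i
  refine ⟨∑ j, A i j * m j, ?_⟩
  have hx' : (matCLM (A.map (Int.cast : ℤ → ℝ))) x i
      = ∑ j, (A i j : ℝ) * x j := by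
    simp [matCLM, Matrix.toEuclideanLin, Matrix.mulVec, dotProduct]
  show (matCLM (A.map (Int.cast : ℤ → ℝ))) x i = _
  rw [hx']
  push_cast
  exact Finset.sum_congr rfl fun j _ => by rw [hm j]

/-- The endomorphism of the torus T^d induced by an integer matrix A, i.e. x ↦ Ax (mod ℤ^d). -/
def toralMap {d : ℕ} (A : Matrix (Fin d) (Fin d) ℤ) : Torus d → Torus d :=
  QuotientAddGroup.map (intLattice d) (intLattice d)
    ((matCLM (A.map (Int.cast : ℤ → ℝ))).toLinearMap.toAddMonoidHom)
    (intLattice_mapsTo A)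

/-- Haar (Lebesgue) probability measure on the torus T^d: the pushforward under the quotient
map of Lebesgue measure restricted to the fundamental domain [0,1)^d. -/
def torusMeasure (d : ℕ) : Measure (Torus d) :=
  Measure.map (QuotientAddGroup.mk)
    (volume.restrict {x : EuclideanSpace ℝ (Fin d) | ∀ i, x i ∈ Set.Ico (0:ℝ) 1})

theorem pos_and_exists_iterate_mem_of_tau_eq {X : Type*} {f : X → X} {A : Set X} {p : ℕ}
    (h : tau f A = p) :
    0 < p ∧ ∃ z ∈ A, f^[p] z ∈ A := by
  set S := {k : ℕ | 0 < k ∧ ((f^[k]) '' A ∩ A).Nonempty}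
  have htau : tau f A = ⨅ k ∈ S, (k : ℕ∞) := rfl
  rcases S.eq_empty_or_nonempty with hS | hS
  · simp [htau, hS] at h
  have hp : p = sInf S := by exact_mod_cast h.symm.trans (htau.trans (ENat.natCast_sInf hS).symm)
  obtain ⟨hp0, _, ⟨z, hz, rfl⟩, hfz⟩ := hp ▸ Nat.sInf_mem hS
  exact ⟨hp0, z, hz, hfz⟩

section ExpandingUnit

variable {𝕜 E : Type*} [NontriviallyNormedField 𝕜] [NormedAddCommGroup E] [NormedSpace 𝕜 E]
  [CompleteSpace E]

-- Banach's fixed point theorem for the contraction `y ↦ u⁻¹ (y + m)`.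
theorem exists_apply_eq_add_of_norm_inv_le (u : (E →L[𝕜] E)ˣ) {K : ℝ≥0}
    (hu : ‖(↑u⁻¹ : E →L[𝕜] E)‖ ≤ K) (hK : K < 1) (z m : E) :
    ∃ y, (u : E →L[𝕜] E) y = y + m ∧ ‖z - y‖ ≤ ‖(u : E →L[𝕜] E) z - z - m‖ / (1 - K) := by
  set L := (u : E →L[𝕜] E)
  set L' := (↑u⁻¹ : E →L[𝕜] E)
  have hLL' (v : E) : L (L' v) = v := DFunLike.congr_fun u.mul_inv v
  have hL'L (v : E) : L' (L v) = v := DFunLike.congr_fun u.inv_mul v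
  have hL' (v : E) : ‖L' v‖ ≤ K * ‖v‖ := L'.le_of_opNorm_le hu v
  set T := fun y => L' (y + m)
  have hT : ContractingWith K T := ⟨hK, LipschitzWith.of_dist_le_mul fun a b => by
    simpa [T, dist_eq_norm, ← map_sub] using hL' (a - b)⟩
  refine ⟨hT.fixedPoint T, ?_, ?_⟩
  · conv_lhs => rw [← hT.fixedPoint_isFixedPt]
    exact hLL' _
  · have hTz : z - T z = L' (L z - z - m) := by
      simp only [T, map_sub, map_add, hL'L, sub_sub]
    have hK1 : (0 : ℝ) < 1 - K := sub_pos.2 hK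
    calc ‖z - hT.fixedPoint T‖ ≤ ‖z - T z‖ / (1 - K) := by
          simpa only [dist_eq_norm] using hT.dist_fixedPoint_le z
      _ ≤ ‖L z - z - m‖ / (1 - K) := by
          gcongr
          rw [hTz]
          exact (hL' _).trans (mul_le_of_le_one_left (norm_nonneg _) hK.le)

theorem exists_pow_apply_eq_add_of_norm_inv_lt_one (u : (E →L[𝕜] E)ˣ)
    (hu : ‖(↑u⁻¹ : E →L[𝕜] E)‖ < 1) {n : ℕ} (hn : 0 < n) (z m : E) :
    ∃ y, (u : E →L[𝕜] E)^[n] y = y + m ∧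
      ‖z - y‖ ≤ ‖(u : E →L[𝕜] E)^[n] z - z - m‖ / (1 - ‖(↑u⁻¹ : E →L[𝕜] E)‖) := by
  have hpow : ‖(↑(u ^ n)⁻¹ : E →L[𝕜] E)‖ ≤ ‖(↑u⁻¹ : E →L[𝕜] E)‖₊ := by
    rw [← inv_pow, Units.val_pow_eq_pow_val, coe_nnnorm]
    exact (norm_pow_le' _ hn).trans (pow_le_of_le_one (norm_nonneg _) hu.le hn.ne')
  simpa only [Units.val_pow_eq_pow_val, FunLike.coe_pow_eq_iterate, coe_nnnorm]
    using exists_apply_eq_add_of_norm_inv_le (u ^ n) hpow hu z m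

end ExpandingUnit

theorem QuotientAddGroup.exists_mem_norm_sub_sub_lt_of_dist_mk_lt {M : Type*}
    [SeminormedAddCommGroup M] {S : AddSubgroup M} {a b : M} {ε : ℝ}
    (h : dist (a : M ⧸ S) b < ε) : ∃ s ∈ S, ‖a - b - s‖ < ε := by
  rw [dist_eq_norm, ← mk_sub, norm_lt_iff] at h
  obtain ⟨w, hw, hwε⟩ := h
  exact ⟨a - b - w, by simpa using (eq_iff_sub_mem.1 hw.symm), by simpa using hwε⟩

theorem QuotientAddGroup.dist_mk_le {M : Type*} [SeminormedAddCommGroup M] {S : AddSubgroup M}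
    (a b : M) : dist (a : M ⧸ S) b ≤ dist a b := by
  simpa only [dist_eq_norm, ← mk_sub] using norm_mk_le_norm

section Torus

variable {d : ℕ}

theorem matCLM_mul (M N : Matrix (Fin d) (Fin d) ℝ) : matCLM (M * N) = matCLM M * matCLM N := by
  ext v : 1
  simp [matCLM]

theorem matCLM_one : matCLM (1 : Matrix (Fin d) (Fin d) ℝ) = 1 := by
  ext v : 1
  simp [matCLM]

def matCLMUnit (B : Matrix (Fin d) (Fin d) ℝ) (hB : IsUnit B.det) :
    (EuclideanSpace ℝ (Fin d) →L[ℝ] EuclideanSpace ℝ (Fin d))ˣ where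
  val := matCLM B
  inv := matCLM B⁻¹
  val_inv := by rw [← matCLM_mul, B.mul_nonsing_inv hB, matCLM_one]
  inv_val := by rw [← matCLM_mul, B.nonsing_inv_mul hB, matCLM_one]

@[simp]
theorem coe_matCLMUnit (B : Matrix (Fin d) (Fin d) ℝ) (hB : IsUnit B.det) :
    (matCLMUnit B hB : EuclideanSpace ℝ (Fin d) →L[ℝ] EuclideanSpace ℝ (Fin d)) = matCLM B :=
  rfl

@[simp]
theorem coe_matCLMUnit_inv (B : Matrix (Fin d) (Fin d) ℝ) (hB : IsUnit B.det) :
    (↑(matCLMUnit B hB)⁻¹ : EuclideanSpace ℝ (Fin d) →L[ℝ] EuclideanSpace ℝ (Fin d)) =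
      matCLM B⁻¹ :=
  rfl

theorem toralMap_iterate_mk (A : Matrix (Fin d) (Fin d) ℤ) (n : ℕ)
    (v : EuclideanSpace ℝ (Fin d)) :
    (toralMap A)^[n] (v : Torus d) = ((matCLM (A.map (Int.cast : ℤ → ℝ)))^[n] v : Torus d) := by
  induction n generalizing v with
  | zero => rfl
  | succ n ih => rw [Function.iterate_succ_apply, Function.iterate_succ_apply, ← ih]; rfl

end Torus

theorem statement5_general (d : ℕ) (A : Matrix (Fin d) (Fin d) ℤ)
    (hdet : (A.map (Int.cast : ℤ → ℝ)).det ≠ 0)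
    (hnorm : ‖matCLM ((A.map (Int.cast : ℤ → ℝ))⁻¹)‖ < 1)
    (c : ℝ) (hc : c = 1 - ‖matCLM ((A.map (Int.cast : ℤ → ℝ))⁻¹)‖)
    (x : Torus d) (r : ℝ)
    (p : ℕ) (hp : tau (toralMap A) (ball x r) = (p : ℕ∞)) :
    Metric.infDist x {y : Torus d | (toralMap A)^[p] y = y} ≤ (1 + 2 / c) * r := by
  set L := matCLM (A.map (Int.cast : ℤ → ℝ))
  obtain ⟨hp0, z, hz, hfz⟩ := pos_and_exists_iterate_mem_of_tau_eq hp
  obtain ⟨z, rfl⟩ := QuotientAddGroup.mk_surjective z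
  rw [mem_ball, toralMap_iterate_mk] at hfz
  rw [mem_ball] at hz
  obtain ⟨m, hm, hmr⟩ : ∃ m ∈ intLattice d, ‖L^[p] z - z - m‖ < 2 * r :=
    QuotientAddGroup.exists_mem_norm_sub_sub_lt_of_dist_mk_lt
      (by linarith [dist_triangle_right ((L^[p] z : _) : Torus d) z x])
  obtain ⟨y, hy, hzy⟩ := exists_pow_apply_eq_add_of_norm_inv_lt_one
    (matCLMUnit _ (isUnit_iff_ne_zero.2 hdet)) hnorm hp0 z m
  simp only [coe_matCLMUnit, coe_matCLMUnit_inv, ← hc] at hy hzy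
  have hper : (y : Torus d) ∈ {w : Torus d | (toralMap A)^[p] w = w} := by
    rw [mem_ofPred_eq, toralMap_iterate_mk, hy]
    exact QuotientAddGroup.mk_add_of_mem y hm
  have hc0 : 0 < c := by linarith
  have hzy' : dist (z : Torus d) y ≤ 2 * r / c :=
    (QuotientAddGroup.dist_mk_le z y).trans ((dist_eq_norm z y).trans_le (hzy.trans (by gcongr)))
  calc infDist x {y : Torus d | (toralMap A)^[p] y = y}
      ≤ dist x (z : Torus d) + dist (z : Torus d) y :=
        (infDist_le_dist_of_mem hper).trans (dist_triangle x z y)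
    _ ≤ r + 2 * r / c := add_le_add ((dist_comm x _).trans_le hz.le) hzy'
    _ = (1 + 2 / c) * r := by ring

/-- For an expanding linear toral endomorphism `f_A` (A an integer matrix invertible over ℝ
with `‖A⁻¹‖ < 1`), with `c = 1 - ‖A⁻¹‖`: if the first return time `p = τ(B(x,r))` of a ball
is finite, then the distance from x to the set `F_p = {y : f_A^p y = y}` of points of period
p is at most `(1 + 2/c)·r`. -/
theorem statement5 (d : ℕ) (A : Matrix (Fin d) (Fin d) ℤ)
    (hdet : (A.map (Int.cast : ℤ → ℝ)).det ≠ 0)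
    (hnorm : ‖matCLM ((A.map (Int.cast : ℤ → ℝ))⁻¹)‖ < 1)
    (c : ℝ) (hc : c = 1 - ‖matCLM ((A.map (Int.cast : ℤ → ℝ))⁻¹)‖)
    (x : Torus d) (r : ℝ) (hr : 0 < r)
    (p : ℕ) (hp : tau (toralMap A) (ball x r) = (p : ℕ∞)) :
    Metric.infDist x {y : Torus d | (toralMap A)^[p] y = y} ≤ (1 + 2 / c) * r :=
  statement5_general d A hdet hnorm c hc x r p hp

end
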